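/- arXiv:1209.5192 — 2 statements merged into one kernel-verified Lean document; each statement's English description precedes it below -/
import Mathlib

section
/- For every positive integer l and all distinct positive integers j and k, A(l,j,k) > 2^{l-1}·T(l,j,k); that is, an incorrect transition-error claim (which indicates misaligned positions j ≠ k in the two configurations) leads the verifier to acceptance with probability at least 2^{l-1} times greater than the probability that it leads to a test (and hence possible rejection). -/
open Filter

noncomputable def A (l j k : ℕ) : ℝ :=
  (2:ℝ) ^ (-(4 * (l:ℤ) * j + l)) + (1 - (2:ℝ) ^ (-(4 * (l:ℤ) * j + l))) * (2:ℝ) ^ (-(4 * (l:ℤ) * k + l))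

noncomputable def T (l j k : ℕ) : ℝ :=
  (1 - A l j k) * (2:ℝ) ^ (-(2 * (l:ℤ) * (j + k)))

/-!
With `x = 2^(-(4lj+l))` and `y = 2^(-(4lk+l))` we have `A = x + (1 - x) y ≥ max x y`, and
`2^(l-1) T = (1 - A) 2^e` with `e = l - 1 - 2l(j+k)`. Since `j ≠ k`, `j + k ≥ 2 min j k + 1`, so
`e < -(4l min j k + l)` and `2^e ≤ max x y ≤ A`; hence `(1 - A) 2^e < 2^e ≤ A`.
-/

section OrderedRing

variable {R : Type*} [CommRing R] [PartialOrder R] {x y a q : R}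

lemma left_le_add_one_sub_mul [IsOrderedRing R] (hx : x ≤ 1) (hy : 0 ≤ y) :
    x ≤ x + (1 - x) * y :=
  le_add_of_nonneg_right (mul_nonneg (sub_nonneg.mpr hx) hy)

lemma right_le_add_one_sub_mul [IsOrderedRing R] (hx : 0 ≤ x) (hy : y ≤ 1) :
    y ≤ x + (1 - x) * y := by
  have : 0 ≤ x * (1 - y) := mul_nonneg hx (sub_nonneg.mpr hy)
  linear_combination this

lemma one_sub_mul_lt_of_le [IsStrictOrderedRing R] (ha : 0 < a) (hq : 0 < q) (hqa : q ≤ a) :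
    (1 - a) * q < a := by
  calc (1 - a) * q = q - a * q := by ring
    _ < q := sub_lt_self q (mul_pos ha hq)
    _ ≤ a := hqa

end OrderedRing

lemma test_exponent_le_of_lt (l : ℕ) {m n : ℕ} (hmn : m < n) :
    (l:ℤ) - 1 + -(2 * l * (m + n)) ≤ -(4 * l * m + l) := by
  have : (m:ℤ) + 1 ≤ n := by exact_mod_cast hmn
  nlinarith [(Nat.cast_nonneg l : (0:ℤ) ≤ l)]

lemma two_zpow_neg_le_one (l n : ℕ) : (2:ℝ) ^ (-(4 * (l:ℤ) * n + l)) ≤ 1 :=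
  zpow_le_one_of_nonpos₀ one_le_two (by simp only [neg_nonpos]; positivity)

lemma A_pos (l j k : ℕ) : 0 < A l j k :=
  (zpow_pos two_pos _).trans_le
    (left_le_add_one_sub_mul (two_zpow_neg_le_one l j) (zpow_pos two_pos _).le)

lemma two_zpow_le_A {l j k : ℕ} (hjk : j ≠ k) :
    (2:ℝ) ^ ((l:ℤ) - 1 + -(2 * l * (j + k))) ≤ A l j k := by
  rcases hjk.lt_or_gt with hlt | hgt
  · calc (2:ℝ) ^ ((l:ℤ) - 1 + -(2 * l * (j + k)))
        ≤ 2 ^ (-(4 * (l:ℤ) * j + l)) :=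
          zpow_le_zpow_right₀ one_le_two (test_exponent_le_of_lt l hlt)
      _ ≤ A l j k := left_le_add_one_sub_mul (two_zpow_neg_le_one l j) (zpow_pos two_pos _).le
  · calc (2:ℝ) ^ ((l:ℤ) - 1 + -(2 * l * (j + k)))
        ≤ 2 ^ (-(4 * (l:ℤ) * k + l)) := by
          rw [add_comm (j:ℤ)]
          exact zpow_le_zpow_right₀ one_le_two (test_exponent_le_of_lt l hgt)
      _ ≤ A l j k := right_le_add_one_sub_mul (zpow_pos two_pos _).le (two_zpow_neg_le_one l k)

lemma two_zpow_mul_T (l j k : ℕ) :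
    (2:ℝ) ^ ((l:ℤ) - 1) * T l j k = (1 - A l j k) * 2 ^ ((l:ℤ) - 1 + -(2 * l * (j + k))) := by
  rw [T, zpow_add₀ two_ne_zero]
  ring

theorem stmt3_general (l j k : ℕ) (hjk : j ≠ k) :
    A l j k > (2:ℝ) ^ ((l:ℤ) - 1) * T l j k := by
  rw [two_zpow_mul_T]
  exact one_sub_mul_lt_of_le (A_pos l j k) (zpow_pos two_pos _) (two_zpow_le_A hjk)

theorem stmt3 (l j k : ℕ) (hl : 0 < l) (hj : 0 < j) (hk : 0 < k) (hjk : j ≠ k) :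
    A l j k > (2:ℝ) ^ ((l:ℤ) - 1) * T l j k :=
  stmt3_general l j k hjk
end

section
/- For all positive integers l and j, T(l,j,j) > 2^{l-2}·A(l,j,j); that is, a correct transition-error claim (indicating equal positions j = k in the two configurations) leads the verifier to test the indicated windows (and hence reject the invalid transition) with probability at least 2^{l-2} times greater than the probability of an outright acceptance. -/
open Filter

/-!
With `x = 2^{-(4lj+l)}` the verifier accepts outright unless both coin sets fail, so
`A(l,j,j) = 1 - (1-x)^2 = x(2-x)`, while the control coins contribute `2^{-4lj} = 2^l x`,
so `T(l,j,j) = 2^l x (1-x)^2`. After cancelling `2^l x` the claim becomes `(2-x)/4 < (1-x)^2`,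
which holds as soon as `x ≤ 1/4`, and `l, j ≥ 1` gives `x ≤ 2^{-5}`.
-/

lemma one_sub_A (l j k : ℕ) :
    1 - A l j k = (1 - (2:ℝ) ^ (-(4 * (l:ℤ) * j + l))) * (1 - (2:ℝ) ^ (-(4 * (l:ℤ) * k + l))) := by
  unfold A
  ring

lemma A_self (l j : ℕ) :
    A l j j = (2:ℝ) ^ (-(4 * (l:ℤ) * j + l)) * (2 - (2:ℝ) ^ (-(4 * (l:ℤ) * j + l))) := by
  linear_combination -(one_sub_A l j j)

lemma T_self (l j : ℕ) :
    T l j j = (2:ℝ) ^ (l:ℤ) * (2:ℝ) ^ (-(4 * (l:ℤ) * j + l))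
      * (1 - (2:ℝ) ^ (-(4 * (l:ℤ) * j + l))) ^ 2 := by
  have hcontrol : (2:ℝ) ^ (-(2 * (l:ℤ) * (j + j)))
      = (2:ℝ) ^ (l:ℤ) * (2:ℝ) ^ (-(4 * (l:ℤ) * j + l)) := by
    rw [← zpow_add₀ two_ne_zero]
    ring_nf
  rw [T, one_sub_A, hcontrol]
  ring

lemma two_zpow_neg_le_quarter {e : ℤ} (he : 2 ≤ e) : (2:ℝ) ^ (-e) ≤ 1 / 4 :=
  calc (2:ℝ) ^ (-e) ≤ (2:ℝ) ^ (-2 : ℤ) := zpow_le_zpow_right₀ one_le_two (by omega)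
    _ = 1 / 4 := by norm_num

lemma div_four_lt_one_sub_sq {x : ℝ} (hx : x ≤ 1 / 4) : (2 - x) / 4 < (1 - x) ^ 2 := by
  nlinarith [sq_nonneg x]

theorem stmt6 (l j : ℕ) (hl : 0 < l) (hj : 0 < j) :
    T l j j > (2:ℝ) ^ ((l:ℤ) - 2) * A l j j := by
  rw [T_self, A_self]
  set x : ℝ := (2:ℝ) ^ (-(4 * (l:ℤ) * j + l))
  have hx : x ≤ 1 / 4 := two_zpow_neg_le_quarter (by nlinarith)
  have hscale : (2:ℝ) ^ ((l:ℤ) - 2) = (2:ℝ) ^ (l:ℤ) / 4 := by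
    rw [zpow_sub₀ two_ne_zero]
    norm_num
  calc (2:ℝ) ^ ((l:ℤ) - 2) * (x * (2 - x)) = (2:ℝ) ^ (l:ℤ) * x * ((2 - x) / 4) := by
        rw [hscale]; ring
    _ < (2:ℝ) ^ (l:ℤ) * x * (1 - x) ^ 2 :=
        mul_lt_mul_of_pos_left (div_four_lt_one_sub_sq hx) (by positivity)
end
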